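/- arXiv:2009.08574 — 5 statements merged into one kernel-verified Lean document; each statement's English description precedes it below -/
import Mathlib

section
/- Let f : ℝ^d → ℝ be differentiable, nonnegative, L-smooth and μ-PL* (with L, μ > 0). Fix a step size η with 0 < η < 2/L, and let the sequence (w^{(t)}) be defined by gradient descent w^{(t+1)} = w^{(t)} − η ∇f(w^{(t)}). Then for every t, f(w^{(t+1)}) ≤ (1 − 2μη + μLη²) f(w^{(t)}), the factor satisfies 1 − 2μη + μLη² < 1, and consequently f(w^{(t)}) → 0 as t → ∞. -/
/-!
The descent lemma `f y ≤ f x + ⟪∇f x, y - x⟫ + L/2 ‖y - x‖²`, applied to a gradient step, gives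
`f (x - η ∇f x) ≤ f x - η (1 - Lη/2) ‖∇f x‖²`. For `0 ≤ η ≤ 2/L` the coefficient of `‖∇f x‖²` is
nonpositive, so the PL* inequality `‖∇f x‖² ≥ 2μ f x` turns this into the contraction
`f (x - η ∇f x) ≤ (1 - 2μη + μLη²) f x`; for `η < 2/L` the factor is `< 1`, and a nonnegative
sequence contracted by a factor `< 1` at every step is dominated by a geometric one.
-/

open Filter Topology
open scoped InnerProductSpace

section Smooth

variable {E : Type*} [NormedAddCommGroup E] [InnerProductSpace ℝ E] [CompleteSpace E]
  {f : E → ℝ} {L : ℝ}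

theorem le_add_inner_gradient_add_half_mul_sq (hf : Differentiable ℝ f)
    (hsmooth : ∀ x y, ‖gradient f x - gradient f y‖ ≤ L * ‖x - y‖) (x y : E) :
    f y ≤ f x + ⟪gradient f x, y - x⟫_ℝ + L / 2 * ‖y - x‖ ^ 2 := by
  set v := y - x
  -- The claim is `g 1 ≤ g 0`.
  let g : ℝ → ℝ := fun t => f (x + t • v) - t * ⟪gradient f x, v⟫_ℝ - L / 2 * t ^ 2 * ‖v‖ ^ 2
  let g' : ℝ → ℝ := fun t => ⟪gradient f (x + t • v) - gradient f x, v⟫_ℝ - L * t * ‖v‖ ^ 2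
  have hg : ∀ t, HasDerivAt g (g' t) t := by
    intro t
    have hline : HasDerivAt (fun s : ℝ => x + s • v) v t := by
      simpa using ((hasDerivAt_id t).smul_const v).const_add x
    have hcomp := (hf (x + t • v)).hasGradientAt.hasFDerivAt.comp_hasDerivAt t hline
    have := ((hcomp.sub ((hasDerivAt_id t).mul_const ⟪gradient f x, v⟫_ℝ)).sub
      (((hasDerivAt_pow 2 t).const_mul (L / 2)).mul_const (‖v‖ ^ 2)))
    refine this.congr_deriv ?_
    simp only [g', inner_sub_left, InnerProductSpace.toDual_apply_apply]
    ring
  have hg'_nonpos : ∀ t, 0 ≤ t → g' t ≤ 0 := by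
    intro t ht
    suffices ⟪gradient f (x + t • v) - gradient f x, v⟫_ℝ ≤ L * t * ‖v‖ ^ 2 from sub_nonpos.2 this
    calc ⟪gradient f (x + t • v) - gradient f x, v⟫_ℝ
        ≤ ‖gradient f (x + t • v) - gradient f x‖ * ‖v‖ := real_inner_le_norm _ _
      _ ≤ L * ‖t • v‖ * ‖v‖ := by
          gcongr
          simpa using hsmooth (x + t • v) x
      _ = L * t * ‖v‖ ^ 2 := by rw [norm_smul, Real.norm_of_nonneg ht]; ring
  have hanti : AntitoneOn g (Set.Ici 0) :=
    antitoneOn_of_hasDerivWithinAt_nonpos (convex_Ici 0)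
      (fun t _ => (hg t).continuousAt.continuousWithinAt) (fun t _ => (hg t).hasDerivWithinAt)
      (fun t ht => hg'_nonpos t (le_of_lt (by simpa using ht)))
  have h10 : g 1 ≤ g 0 := hanti Set.self_mem_Ici (Set.mem_Ici.2 zero_le_one) zero_le_one
  simp only [g, zero_smul, add_zero, one_smul, v, add_sub_cancel] at h10
  linarith

theorem apply_sub_smul_gradient_le (hf : Differentiable ℝ f)
    (hsmooth : ∀ x y, ‖gradient f x - gradient f y‖ ≤ L * ‖x - y‖) (x : E) (η : ℝ) :
    f (x - η • gradient f x) ≤ f x - η * (1 - L * η / 2) * ‖gradient f x‖ ^ 2 := by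
  have h := le_add_inner_gradient_add_half_mul_sq hf hsmooth x (x - η • gradient f x)
  rw [sub_sub_cancel_left, inner_neg_right, norm_neg, real_inner_smul_right,
    real_inner_self_eq_norm_sq, norm_smul, mul_pow, Real.norm_eq_abs, sq_abs] at h
  linarith

theorem apply_sub_smul_gradient_le_mul_of_PL {μ η : ℝ} (hf : Differentiable ℝ f)
    (hsmooth : ∀ x y, ‖gradient f x - gradient f y‖ ≤ L * ‖x - y‖)
    (hPL : ∀ x, μ * f x ≤ 1 / 2 * ‖gradient f x‖ ^ 2) (hη : 0 ≤ η) (hLη : L * η ≤ 2) (x : E) :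
    f (x - η • gradient f x) ≤ (1 - 2 * μ * η + μ * L * η ^ 2) * f x := by
  have hcoeff : 0 ≤ η * (1 - L * η / 2) := mul_nonneg hη (by linarith)
  calc f (x - η • gradient f x) ≤ f x - η * (1 - L * η / 2) * ‖gradient f x‖ ^ 2 :=
        apply_sub_smul_gradient_le hf hsmooth x η
    _ ≤ f x - η * (1 - L * η / 2) * (2 * μ * f x) := by
        gcongr
        linarith [hPL x]
    _ = (1 - 2 * μ * η + μ * L * η ^ 2) * f x := by ring

end Smooth

theorem tendsto_zero_of_succ_le_mul {u : ℕ → ℝ} {q : ℝ} (hu : ∀ n, 0 ≤ u n) (hq : q < 1)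
    (h : ∀ n, u (n + 1) ≤ q * u n) : Tendsto u atTop (𝓝 0) := by
  set r := max q 0
  have hpow : ∀ n, u n ≤ r ^ n * u 0 := by
    intro n
    induction n with
    | zero => simp
    | succ n ih =>
      calc u (n + 1) ≤ r * u n := (h n).trans (by gcongr; exacts [hu n, le_max_left q 0])
        _ ≤ r * (r ^ n * u 0) := by gcongr
        _ = r ^ (n + 1) * u 0 := by ring
  have hgeom : Tendsto (fun n => r ^ n * u 0) atTop (𝓝 0) := by
    simpa using (tendsto_pow_atTop_nhds_zero_of_lt_one (le_max_right q 0)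
      (max_lt hq one_pos)).mul_const (u 0)
  exact squeeze_zero hu hpow hgeom

/-- Gradient descent on a nonnegative, `L`-smooth, `μ`-PL* function
with step size `0 < η < 2/L` contracts the loss by the factor `1 - 2μη + μLη² < 1`
at every step, and the loss converges to `0`. -/
theorem gd_linear_convergence_PLstar {d : ℕ}
    (f : EuclideanSpace ℝ (Fin d) → ℝ) (L μ η : ℝ)
    (hL : 0 < L) (hμ : 0 < μ)
    (hdiff : Differentiable ℝ f)
    (hsmooth : ∀ x y, ‖gradient f x - gradient f y‖ ≤ L * ‖x - y‖)
    (hnonneg : ∀ x, 0 ≤ f x)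
    (hPL : ∀ x, μ * f x ≤ (1 / 2) * ‖gradient f x‖ ^ 2)
    (hη : 0 < η) (hη2 : η < 2 / L)
    (w : ℕ → EuclideanSpace ℝ (Fin d))
    (hstep : ∀ t, w (t + 1) = w t - η • gradient f (w t)) :
    (∀ t, f (w (t + 1)) ≤ (1 - 2 * μ * η + μ * L * η ^ 2) * f (w t)) ∧
      (1 - 2 * μ * η + μ * L * η ^ 2 < 1) ∧
      Filter.Tendsto (fun t => f (w t)) Filter.atTop (nhds 0) := by
  have hLη : L * η < 2 := by rwa [lt_div_iff₀ hL, mul_comm] at hη2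
  have hcontract : ∀ t, f (w (t + 1)) ≤ (1 - 2 * μ * η + μ * L * η ^ 2) * f (w t) := fun t => by
    rw [hstep t]
    exact apply_sub_smul_gradient_le_mul_of_PL hdiff hsmooth hPL hη.le hLη.le (w t)
  have hrate : 1 - 2 * μ * η + μ * L * η ^ 2 < 1 := by
    nlinarith [mul_pos (mul_pos hμ hη) (sub_pos.2 hLη)]
  exact ⟨hcontract, hrate, tendsto_zero_of_succ_le_mul (fun t => hnonneg _) hrate hcontract⟩
end

section
/- Let f : ℝ^d → ℝ be differentiable, L-smooth and μ-PL with global minimizer x* and f* = f(x*), and assume μ ≤ L. For each t ∈ ℕ, let φ^{(t)} : ℝ^d → ℝ^d be α_u^{(t)}-Lipschitz and α_l^{(t)}-coercive with 0 < α_l^{(t)} ≤ α_u^{(t)}. Let (w^{(t)}) satisfy the generalized mirror descent recursion φ^{(t)}(w^{(t+1)}) = φ^{(t)}(w^{(t)}) − η^{(t)} ∇f(w^{(t)}) with step sizes η^{(t)} = α_l^{(t)}/L. Then for every t, f(w^{(t+1)}) − f* ≤ (1 − μ (α_l^{(t)})²/(L (α_u^{(t)})²))(f(w^{(t)}) − f*);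 if moreover lim inf_{t→∞} α_l^{(t)} > 0 and lim sup_{t→∞} α_u^{(t)} < ∞, then f(w^{(t)}) → f* as t → ∞, and there exists c ∈ (0,1] with f(w^{(t)}) − f* ≤ (1 − c)^t (f(w^{(0)}) − f*) for all t. -/
/-!
Coercivity of the mirror makes each step a descent direction, `⟪∇f w, w' - w⟫ ≤ -L ‖w' - w‖²`,
so the descent lemma for `L`-smooth functions gives `f w' ≤ f w - L/2 ‖w' - w‖²`. Lipschitz
continuity of the mirror bounds the step from below, `α_l ‖∇f w‖ ≤ L α_u ‖w' - w‖`, and the PL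
inequality turns `‖∇f w‖²` into the excess loss: this is the per-step contraction. When `α_l` is
eventually bounded below and `α_u` above, the rates are bounded below by a positive constant
(the finitely many earlier rates being positive), which gives the geometric bound.
-/

open Filter Set Topology

variable {E : Type*} [NormedAddCommGroup E] [InnerProductSpace ℝ E]

theorem inner_le_of_mirror_step {φ : E → E} {x x' v : E} {η a : ℝ}
    (hcoer : a * ‖x' - x‖ ^ 2 ≤ inner ℝ (φ x' - φ x) (x' - x)) (hstep : φ x' = φ x - η • v) :
    η * inner ℝ v (x' - x) ≤ -(a * ‖x' - x‖ ^ 2) := by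
  rw [hstep, sub_sub_cancel_left, inner_neg_left, real_inner_smul_left] at hcoer
  linarith

theorem norm_le_of_mirror_step {φ : E → E} {x x' v : E} {η u : ℝ} (hη : 0 ≤ η)
    (hlip : ‖φ x' - φ x‖ ≤ u * ‖x' - x‖) (hstep : φ x' = φ x - η • v) :
    η * ‖v‖ ≤ u * ‖x' - x‖ := by
  rwa [hstep, sub_sub_cancel_left, norm_neg, norm_smul, Real.norm_of_nonneg hη] at hlip

section

variable [CompleteSpace E]

theorem le_add_inner_gradient_add_sq_of_lipschitz_gradient {f : E → ℝ} {L : ℝ}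
    (hf : Differentiable ℝ f) (hL : ∀ x y, ‖gradient f x - gradient f y‖ ≤ L * ‖x - y‖)
    (x y : E) :
    f y ≤ f x + inner ℝ (gradient f x) (y - x) + L / 2 * ‖y - x‖ ^ 2 := by
  set Δ := y - x
  have hline : ∀ s : ℝ, HasDerivAt (fun s : ℝ => f (x + s • Δ))
      (inner ℝ (gradient f (x + s • Δ)) Δ) s := fun s => by
    rw [inner_gradient_left]
    exact (hf _).hasFDerivAt.comp_hasDerivAt s
      (by simpa using ((hasDerivAt_id s).smul_const Δ).const_add x)
  have hbound : ∀ s : ℝ, HasDerivAt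
      (fun s : ℝ => f x + s * inner ℝ (gradient f x) Δ + L / 2 * s ^ 2 * ‖Δ‖ ^ 2)
      (inner ℝ (gradient f x) Δ + L * s * ‖Δ‖ ^ 2) s := fun s => by
    have hlin := ((hasDerivAt_id s).mul_const (inner ℝ (gradient f x) Δ)).const_add (f x)
    have hquad := ((hasDerivAt_pow 2 s).const_mul (L / 2)).mul_const (‖Δ‖ ^ 2)
    exact (hlin.add hquad).congr_deriv (by push_cast; ring)
  have hslope : ∀ s ∈ Ico (0 : ℝ) 1,
      inner ℝ (gradient f (x + s • Δ)) Δ ≤ inner ℝ (gradient f x) Δ + L * s * ‖Δ‖ ^ 2 := by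
    rintro s ⟨hs, -⟩
    have hlip : ‖gradient f (x + s • Δ) - gradient f x‖ ≤ L * s * ‖Δ‖ := by
      simpa [norm_smul, abs_of_nonneg hs, mul_assoc] using hL (x + s • Δ) x
    calc inner ℝ (gradient f (x + s • Δ)) Δ
        = inner ℝ (gradient f x) Δ + inner ℝ (gradient f (x + s • Δ) - gradient f x) Δ := by
          rw [inner_sub_left]; ring
      _ ≤ inner ℝ (gradient f x) Δ + L * s * ‖Δ‖ * ‖Δ‖ := by
          gcongr
          exact (real_inner_le_norm _ _).trans (by gcongr)
      _ = _ := by ring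
  have := image_le_of_deriv_right_le_deriv_boundary
    (fun s _ => (hline s).continuousAt.continuousWithinAt) (fun s _ => (hline s).hasDerivWithinAt)
    (by simp) (fun s _ => (hbound s).continuousAt.continuousWithinAt)
    (fun s _ => (hbound s).hasDerivWithinAt) hslope (right_mem_Icc.2 zero_le_one)
  simpa [Δ] using this

theorem sub_le_one_sub_mul_of_mirror_step {f : E → ℝ} {φ : E → E} {L μ a u m : ℝ} {x x' : E}
    (hL : 0 < L) (ha : 0 < a) (hf : Differentiable ℝ f)
    (hsmooth : ∀ x y, ‖gradient f x - gradient f y‖ ≤ L * ‖x - y‖)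
    (hPL : μ * (f x - m) ≤ 1 / 2 * ‖gradient f x‖ ^ 2)
    (hlip : ‖φ x' - φ x‖ ≤ u * ‖x' - x‖)
    (hcoer : a * ‖x' - x‖ ^ 2 ≤ inner ℝ (φ x' - φ x) (x' - x))
    (hstep : φ x' = φ x - (a / L) • gradient f x) :
    f x' - m ≤ (1 - μ * a ^ 2 / (L * u ^ 2)) * (f x - m) := by
  set g := gradient f x
  set N := ‖x' - x‖
  have hdecrease : f x' ≤ f x - L / 2 * N ^ 2 := by
    have hinner : a / L * inner ℝ g (x' - x) ≤ -(a * N ^ 2) :=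
      inner_le_of_mirror_step hcoer hstep
    have hinner_le : inner ℝ g (x' - x) ≤ -(L * N ^ 2) := by
      rw [div_mul_eq_mul_div, div_le_iff₀ hL] at hinner
      nlinarith
    linarith [le_add_inner_gradient_add_sq_of_lipschitz_gradient hf hsmooth x x']
  have hgrad : (a * ‖g‖) ^ 2 ≤ (L * u * N) ^ 2 := by
    have hnorm : a / L * ‖g‖ ≤ u * N := norm_le_of_mirror_step (div_pos ha hL).le hlip hstep
    rw [div_mul_eq_mul_div, div_le_iff₀ hL] at hnorm
    exact pow_le_pow_left₀ (by positivity) (by linarith) 2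
  rcases eq_or_ne u 0 with rfl | hu
  · rw [zero_pow two_ne_zero, mul_zero, div_zero, sub_zero, one_mul]
    nlinarith
  calc f x' - m ≤ f x - m - L / 2 * N ^ 2 := by linarith
    _ ≤ f x - m - a ^ 2 / (L * u ^ 2) * (μ * (f x - m)) := by
      refine sub_le_sub_left ?_ _
      calc a ^ 2 / (L * u ^ 2) * (μ * (f x - m)) ≤ a ^ 2 / (L * u ^ 2) * (1 / 2 * ‖g‖ ^ 2) := by
            gcongr
        _ = (a * ‖g‖) ^ 2 / (2 * L * u ^ 2) := by ring
        _ ≤ (L * u * N) ^ 2 / (2 * L * u ^ 2) := by gcongr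
        _ = L / 2 * N ^ 2 := by field_simp
    _ = (1 - μ * a ^ 2 / (L * u ^ 2)) * (f x - m) := by ring

end

theorem exists_pos_forall_le_of_eventually {ρ : ℕ → ℝ} (hρ : ∀ n, 0 < ρ n)
    (hev : ∃ c > 0, ∀ᶠ n in atTop, c ≤ ρ n) : ∃ c > 0, ∀ n, c ≤ ρ n := by
  obtain ⟨c, hc, hev⟩ := hev
  obtain ⟨N, hN⟩ := eventually_atTop.1 hev
  refine ⟨min c ((Finset.range (N + 1)).inf' Finset.nonempty_range_add_one ρ),
    lt_min hc ((Finset.lt_inf'_iff _).2 fun n _ => hρ n), fun n => ?_⟩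
  rcases le_or_gt n N with hn | hn
  · exact (min_le_right _ _).trans (Finset.inf'_le _ (Finset.mem_range_succ_iff.2 hn))
  · exact (min_le_left _ _).trans (hN n hn.le)

theorem exists_le_geometric_of_le_one_sub_mul {e ρ : ℕ → ℝ} (he : ∀ n, 0 ≤ e n)
    (hstep : ∀ n, e (n + 1) ≤ (1 - ρ n) * e n) (hρ : ∀ n, 0 < ρ n)
    (hev : ∃ c > 0, ∀ᶠ n in atTop, c ≤ ρ n) :
    ∃ c, 0 < c ∧ c ≤ 1 ∧ ∀ n, e n ≤ (1 - c) ^ n * e 0 := by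
  obtain ⟨c, hc, hcρ⟩ := exists_pos_forall_le_of_eventually hρ hev
  refine ⟨min c 1, lt_min hc one_pos, min_le_right _ _, fun n => le_geom ?_ n fun k _ => ?_⟩
  · linarith [min_le_right c 1]
  · exact (hstep k).trans (mul_le_mul_of_nonneg_right
      (by linarith [min_le_left c 1, hcρ k]) (he k))

theorem tendsto_zero_of_le_geometric {e : ℕ → ℝ} {c : ℝ} (he : ∀ n, 0 ≤ e n) (hc : 0 < c)
    (hc1 : c ≤ 1) (hgeom : ∀ n, e n ≤ (1 - c) ^ n * e 0) : Tendsto e atTop (𝓝 0) := by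
  have hlim : Tendsto (fun n => (1 - c) ^ n * e 0) atTop (𝓝 0) := by
    simpa using (tendsto_pow_atTop_nhds_zero_of_lt_one (by linarith) (by linarith)).mul_const (e 0)
  exact squeeze_zero he hgeom hlim

theorem gmd_time_dependent_linear_convergence_general {d : ℕ}
    (f : EuclideanSpace ℝ (Fin d) → ℝ) (L μ : ℝ)
    (hL : 0 < L) (hμ : 0 < μ)
    (hdiff : Differentiable ℝ f)
    (hsmooth : ∀ x y, ‖gradient f x - gradient f y‖ ≤ L * ‖x - y‖)
    (xstar : EuclideanSpace ℝ (Fin d))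
    (hmin : ∀ x, f xstar ≤ f x)
    (hPL : ∀ x, μ * (f x - f xstar) ≤ (1 / 2) * ‖gradient f x‖ ^ 2)
    (φ : ℕ → EuclideanSpace ℝ (Fin d) → EuclideanSpace ℝ (Fin d))
    (αl αu : ℕ → ℝ)
    (hαl : ∀ t, 0 < αl t) (hαlu : ∀ t, αl t ≤ αu t)
    (hlip : ∀ t x y, ‖φ t x - φ t y‖ ≤ αu t * ‖x - y‖)
    (hcoer : ∀ t x y, αl t * ‖x - y‖ ^ 2 ≤ (inner ℝ (φ t x - φ t y) (x - y) : ℝ))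
    (w : ℕ → EuclideanSpace ℝ (Fin d))
    (hstep : ∀ t, φ t (w (t + 1)) = φ t (w t) - (αl t / L) • gradient f (w t)) :
    (∀ t, f (w (t + 1)) - f xstar ≤
        (1 - μ * (αl t) ^ 2 / (L * (αu t) ^ 2)) * (f (w t) - f xstar)) ∧
      ((∃ a > 0, ∀ᶠ t in Filter.atTop, a ≤ αl t) →
        (∃ M : ℝ, ∀ᶠ t in Filter.atTop, αu t ≤ M) →
        Filter.Tendsto (fun t => f (w t)) Filter.atTop (nhds (f xstar)) ∧
          ∃ c : ℝ, 0 < c ∧ c ≤ 1 ∧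
            ∀ t, f (w t) - f xstar ≤ (1 - c) ^ t * (f (w 0) - f xstar)) := by
  have hαu : ∀ t, 0 < αu t := fun t => (hαl t).trans_le (hαlu t)
  have hexcess : ∀ t, 0 ≤ f (w t) - f xstar := fun t => sub_nonneg.2 (hmin (w t))
  have hcontract : ∀ t, f (w (t + 1)) - f xstar ≤
      (1 - μ * (αl t) ^ 2 / (L * (αu t) ^ 2)) * (f (w t) - f xstar) := fun t =>
    sub_le_one_sub_mul_of_mirror_step hL (hαl t) hdiff hsmooth (hPL (w t)) (hlip t _ _)
      (hcoer t _ _) (hstep t)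
  refine ⟨hcontract, fun ⟨a, ha, hαl_ge⟩ ⟨M, hαu_le⟩ => ?_⟩
  obtain ⟨t₀, ht₀⟩ := hαu_le.exists
  have hM : 0 < M := (hαu t₀).trans_le ht₀
  have hrate : ∃ c > 0, ∀ᶠ t in atTop, c ≤ μ * (αl t) ^ 2 / (L * (αu t) ^ 2) :=
    ⟨μ * a ^ 2 / (L * M ^ 2), by positivity, (hαl_ge.and hαu_le).mono fun t ⟨hat, htM⟩ => by
      have := hαu t
      gcongr⟩
  obtain ⟨c, hc, hc1, hgeom⟩ := exists_le_geometric_of_le_one_sub_mul hexcess hcontract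
    (fun t => by have := hαl t; have := hαu t; positivity) hrate
  exact ⟨tendsto_sub_nhds_zero_iff.1 (tendsto_zero_of_le_geometric hexcess hc hc1 hgeom),
    c, hc, hc1, hgeom⟩

/-- Generalized mirror descent with time-dependent mirrors `φ^{(t)}`
(each `α_u^{(t)}`-Lipschitz and `α_l^{(t)}`-coercive) and step sizes `η^{(t)} = α_l^{(t)}/L`
contracts the excess loss of an `L`-smooth, `μ`-PL function at each step by the factor
`1 - μ(α_l^{(t)})²/(L(α_u^{(t)})²)`; if in addition `lim inf α_l^{(t)} > 0` and
`lim sup α_u^{(t)} < ∞` then `f(w^{(t)}) → f*` and the convergence is linear. -/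
theorem gmd_time_dependent_linear_convergence {d : ℕ}
    (f : EuclideanSpace ℝ (Fin d) → ℝ) (L μ : ℝ)
    (hL : 0 < L) (hμ : 0 < μ) (hμL : μ ≤ L)
    (hdiff : Differentiable ℝ f)
    (hsmooth : ∀ x y, ‖gradient f x - gradient f y‖ ≤ L * ‖x - y‖)
    (xstar : EuclideanSpace ℝ (Fin d))
    (hmin : ∀ x, f xstar ≤ f x)
    (hPL : ∀ x, μ * (f x - f xstar) ≤ (1 / 2) * ‖gradient f x‖ ^ 2)
    (φ : ℕ → EuclideanSpace ℝ (Fin d) → EuclideanSpace ℝ (Fin d))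
    (αl αu : ℕ → ℝ)
    (hαl : ∀ t, 0 < αl t) (hαlu : ∀ t, αl t ≤ αu t)
    (hlip : ∀ t x y, ‖φ t x - φ t y‖ ≤ αu t * ‖x - y‖)
    (hcoer : ∀ t x y, αl t * ‖x - y‖ ^ 2 ≤ (inner ℝ (φ t x - φ t y) (x - y) : ℝ))
    (w : ℕ → EuclideanSpace ℝ (Fin d))
    (hstep : ∀ t, φ t (w (t + 1)) = φ t (w t) - (αl t / L) • gradient f (w t)) :
    (∀ t, f (w (t + 1)) - f xstar ≤
        (1 - μ * (αl t) ^ 2 / (L * (αu t) ^ 2)) * (f (w t) - f xstar)) ∧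
      ((∃ a > 0, ∀ᶠ t in Filter.atTop, a ≤ αl t) →
        (∃ M : ℝ, ∀ᶠ t in Filter.atTop, αu t ≤ M) →
        Filter.Tendsto (fun t => f (w t)) Filter.atTop (nhds (f xstar)) ∧
          ∃ c : ℝ, 0 < c ∧ c ≤ 1 ∧
            ∀ t, f (w t) - f xstar ≤ (1 - c) ^ t * (f (w 0) - f xstar)) :=
  gmd_time_dependent_linear_convergence_general f L μ hL hμ hdiff hsmooth xstar hmin hPL φ αl αu hαl
    hαlu hlip hcoer w hstep
end

section
/- Let f : ℝ^d → ℝ be differentiable and let φ : ℝ^d → ℝ^d satisfy conditions (a) and (b) with constants 0 < α_l ≤ α_u. Fix w ∈ ℝ^d and a step size η > 0 with η · 2√d · ‖∇f(w)‖ < 1, and set w' = φ⁻¹(φ(w) − η ∇f(w)). Then ‖w' − w‖² ≤ (η²/α_l² + η²/(4α_u²)) ‖∇f(w)‖². -/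
/-! The Jacobian lower bound makes `J_φ` coercive, so `J_φ v` has norm at least `α_l ‖v‖`. Since
`J_φ(φ⁻¹ y) ∘ J_{φ⁻¹}(y) = id`, this gives `‖J_{φ⁻¹}‖ ≤ 1/α_l`, and the mean value inequality makes
`φ⁻¹` `(1/α_l)`-Lipschitz. Hence `‖w' - w‖ ≤ (η/α_l) ‖∇f(w)‖`, which is already stronger than the
claimed bound. -/

open scoped RealInnerProductSpace

variable {E : Type*} [NormedAddCommGroup E] [InnerProductSpace ℝ E]

theorem ContinuousLinearMap.mul_norm_le_norm_apply_of_coercive {A : E →L[ℝ] E} {α : ℝ}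
    (hA : ∀ v, α * ‖v‖ ^ 2 ≤ ⟪A v, v⟫) (v : E) : α * ‖v‖ ≤ ‖A v‖ := by
  rcases (norm_nonneg v).eq_or_lt with hv | hv
  · rw [← hv, mul_zero]
    exact norm_nonneg _
  · have h : α * ‖v‖ * ‖v‖ ≤ ‖A v‖ * ‖v‖ := by
      calc α * ‖v‖ * ‖v‖ = α * ‖v‖ ^ 2 := by ring
        _ ≤ ⟪A v, v⟫ := hA v
        _ ≤ ‖A v‖ * ‖v‖ := real_inner_le_norm _ _
    exact le_of_mul_le_mul_right h hv

theorem ContinuousLinearMap.opNorm_le_inv_of_leftInverse_coercive {A B : E →L[ℝ] E} {α : ℝ}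
    (hα : 0 < α) (hA : ∀ v, α * ‖v‖ ^ 2 ≤ ⟪A v, v⟫) (hAB : ∀ u, A (B u) = u) :
    ‖B‖ ≤ α⁻¹ := by
  refine B.opNorm_le_bound (inv_nonneg.mpr hα.le) fun u => ?_
  rw [inv_mul_eq_div, le_div_iff₀' hα]
  simpa only [hAB] using A.mul_norm_le_norm_apply_of_coercive hA (B u)

theorem fderiv_apply_fderiv_of_rightInverse {φ ψ : E → E} (hφ : Differentiable ℝ φ)
    (hψ : Differentiable ℝ ψ) (hφψ : Function.RightInverse ψ φ) (y u : E) :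
    fderiv ℝ φ (ψ y) (fderiv ℝ ψ y u) = u := by
  have hcomp : HasFDerivAt (φ ∘ ψ) ((fderiv ℝ φ (ψ y)).comp (fderiv ℝ ψ y)) y :=
    (hφ (ψ y)).hasFDerivAt.comp y (hψ y).hasFDerivAt
  have hid : φ ∘ ψ = id := funext hφψ
  rw [hid] at hcomp
  exact DFunLike.congr_fun ((hasFDerivAt_id y).unique hcomp).symm u

theorem norm_sub_le_of_rightInverse_of_coercive_fderiv {φ ψ : E → E} {α : ℝ} (hα : 0 < α)
    (hφ : Differentiable ℝ φ) (hψ : Differentiable ℝ ψ) (hφψ : Function.RightInverse ψ φ)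
    (hJ : ∀ x v, α * ‖v‖ ^ 2 ≤ ⟪fderiv ℝ φ x v, v⟫) (a b : E) :
    ‖ψ a - ψ b‖ ≤ α⁻¹ * ‖a - b‖ :=
  convex_univ.norm_image_sub_le_of_norm_fderiv_le (fun y _ => hψ y)
    (fun y _ => ContinuousLinearMap.opNorm_le_inv_of_leftInverse_coercive hα (hJ (ψ y))
      (fderiv_apply_fderiv_of_rightInverse hφ hψ hφψ y))
    (Set.mem_univ b) (Set.mem_univ a)

theorem gmd_step_norm_bound_general {d : ℕ}
    (f : EuclideanSpace ℝ (Fin d) → ℝ)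
    (φ φinv : EuclideanSpace ℝ (Fin d) → EuclideanSpace ℝ (Fin d))
    (αl αu : ℝ) (hαl : 0 < αl)
    -- condition (a)
    (hleft : Function.LeftInverse φinv φ) (hright : Function.RightInverse φinv φ)
    (hφ_analytic : AnalyticOnNhd ℝ φ Set.univ)
    (hφinv_analytic : AnalyticOnNhd ℝ φinv Set.univ)
    (hjac : ∀ x v, αl * ‖v‖ ^ 2 ≤ (inner ℝ (fderiv ℝ φ x v) v : ℝ) ∧
      (inner ℝ (fderiv ℝ φ x v) v : ℝ) ≤ αu * ‖v‖ ^ 2)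
    (w : EuclideanSpace ℝ (Fin d)) (η : ℝ)
    (w' : EuclideanSpace ℝ (Fin d))
    (hstep : w' = φinv (φ w - η • gradient f w)) :
    ‖w' - w‖ ^ 2 ≤ (η ^ 2 / αl ^ 2 + η ^ 2 / (4 * αu ^ 2)) * ‖gradient f w‖ ^ 2 := by
  have hlip : ‖w' - w‖ ≤ αl⁻¹ * (|η| * ‖gradient f w‖) := by
    have h := norm_sub_le_of_rightInverse_of_coercive_fderiv hαl
      (fun x => (hφ_analytic x trivial).differentiableAt)
      (fun x => (hφinv_analytic x trivial).differentiableAt) hright (fun x v => (hjac x v).1)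
      (φ w - η • gradient f w) (φ w)
    rwa [hleft w, ← hstep, sub_sub_cancel_left, norm_neg, norm_smul, Real.norm_eq_abs] at h
  calc ‖w' - w‖ ^ 2 ≤ (αl⁻¹ * (|η| * ‖gradient f w‖)) ^ 2 :=
        pow_le_pow_left₀ (norm_nonneg _) hlip 2
    _ = η ^ 2 / αl ^ 2 * ‖gradient f w‖ ^ 2 := by
        rw [mul_pow, mul_pow, sq_abs, inv_pow]
        ring
    _ ≤ (η ^ 2 / αl ^ 2 + η ^ 2 / (4 * αu ^ 2)) * ‖gradient f w‖ ^ 2 := by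
        gcongr
        exact le_add_of_nonneg_right (by positivity)

/-- Under conditions (a) and (b) on the mirror `φ`, a single generalized
mirror descent step `w' = φ⁻¹(φ(w) - η∇f(w))` with `η·2√d·‖∇f(w)‖ < 1` satisfies
`‖w' - w‖² ≤ (η²/α_l² + η²/(4α_u²))‖∇f(w)‖²`. -/
theorem gmd_step_norm_bound {d : ℕ}
    (f : EuclideanSpace ℝ (Fin d) → ℝ)
    (hdiff : Differentiable ℝ f)
    (φ φinv : EuclideanSpace ℝ (Fin d) → EuclideanSpace ℝ (Fin d))
    (αl αu : ℝ) (hαl : 0 < αl) (hαlu : αl ≤ αu)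
    -- condition (a)
    (hbij : Function.Bijective φ)
    (hleft : Function.LeftInverse φinv φ) (hright : Function.RightInverse φinv φ)
    (hφ_analytic : AnalyticOnNhd ℝ φ Set.univ)
    (hφinv_analytic : AnalyticOnNhd ℝ φinv Set.univ)
    (hjac : ∀ x v, αl * ‖v‖ ^ 2 ≤ (inner ℝ (fderiv ℝ φ x v) v : ℝ) ∧
      (inner ℝ (fderiv ℝ φ x v) v : ℝ) ≤ αu * ‖v‖ ^ 2)
    -- condition (b)
    (hhigher : ∀ k : ℕ, 2 ≤ k → ∀ j : Fin d, ∀ i : Fin k → Fin d,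
      ∀ x : EuclideanSpace ℝ (Fin d),
        |iteratedFDeriv ℝ k (fun y => φinv y j) x (fun m => EuclideanSpace.single (i m) 1)| ≤
          (Nat.factorial k : ℝ) / (2 * αu * d))
    (w : EuclideanSpace ℝ (Fin d)) (η : ℝ) (hη : 0 < η)
    (hηgrad : η * 2 * Real.sqrt d * ‖gradient f w‖ < 1)
    (w' : EuclideanSpace ℝ (Fin d))
    (hstep : w' = φinv (φ w - η • gradient f w)) :
    ‖w' - w‖ ^ 2 ≤ (η ^ 2 / αl ^ 2 + η ^ 2 / (4 * αu ^ 2)) * ‖gradient f w‖ ^ 2 :=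
  gmd_step_norm_bound_general f φ φinv αl αu hαl hleft hright hφ_analytic hφinv_analytic hjac w η w'
    hstep
end

section
/- Let f : ℝ^d → ℝ be differentiable, L-smooth and μ-PL with global minimizer x* and f* = f(x*), and assume μ ≤ L. Let w^{(0)} ∈ ℝ^d have ∂_i f(w^{(0)}) ≠ 0 for every coordinate i, and define the Adagrad iterates: G_i^{(t)} = ∑_{k=0}^{t} (∂_i f(w^{(k)}))², α_l^{(t)} = min_{i∈{1,…,d}} √(G_i^{(t)}), α_u^{(t)} = max_{i∈{1,…,d}} √(G_i^{(t)}), and w^{(t+1)}_i = w^{(t)}_i − (α_l^{(t)}/L) · (G_i^{(t)})^{−1/2} · ∂_i f(w^{(t)}) for each coordinate i. If the ratio α_l^{(t)}/α_u^{(t)} converges as t → ∞ to a nonzero limit, then Adagrad converges linearly: there exists c* ∈ (0,1) such that f(w^{(t)}) − f* ≤ (1 − c*)^t (f(w^{(0)}) − f*) for all t, and in particular f(w^{(t)}) → f*. -/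
/-!
Smoothness gives the descent lemma, so a step `x - L⁻¹ • v` with `‖v‖² ≤ ⟪∇f x, v⟫` lowers `f`
by at least `⟪∇f x, v⟫ / (2L)`. Adagrad's step is of this form with `v = P ∇f x` for the diagonal
preconditioner `P = diag(α_l / √G_i)`, whose entries lie in `[α_l / α_u, 1]`; hence
`⟪∇f x, v⟫ ≥ (α_l / α_u) ‖∇f x‖²` and the PL inequality turns the decrease into the contraction
`f(w⁺) - f* ≤ (1 - μ α_l / (L α_u)) (f(w) - f*)`. The ratios `α_l / α_u` are positive and converge
to a nonzero limit, so they are bounded below by some `δ > 0`, which gives a uniform linear rate.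
-/

open Filter Topology Finset
open scoped RealInnerProductSpace

section Descent

variable {E : Type*} [NormedAddCommGroup E] [InnerProductSpace ℝ E] [CompleteSpace E]
  {f : E → ℝ} {L : ℝ}

theorem descent_lemma (hdiff : Differentiable ℝ f)
    (hsmooth : ∀ x y, ‖gradient f x - gradient f y‖ ≤ L * ‖x - y‖) (x y : E) :
    f y ≤ f x + ⟪gradient f x, y - x⟫ + L / 2 * ‖y - x‖ ^ 2 := by
  set v := y - x
  set φ : ℝ → ℝ := fun s => f (x + s • v) - s * ⟪gradient f x, v⟫ - L / 2 * s ^ 2 * ‖v‖ ^ 2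
  have hφ : ∀ s : ℝ, HasDerivAt φ
      (⟪gradient f (x + s • v) - gradient f x, v⟫ - L * s * ‖v‖ ^ 2) s := by
    intro s
    have hline : HasDerivAt (fun s : ℝ => x + s • v) v s := by
      simpa using ((hasDerivAt_id s).smul_const v).const_add x
    have hf := (hdiff (x + s • v)).hasGradientAt.hasFDerivAt.comp_hasDerivAt s hline
    simp only [InnerProductSpace.toDual_apply_apply] at hf
    refine ((hf.sub ((hasDerivAt_id s).mul_const ⟪gradient f x, v⟫)).sub
      (((hasDerivAt_pow 2 s).const_mul (L / 2)).mul_const (‖v‖ ^ 2))).congr_deriv ?_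
    simp only [inner_sub_left, Nat.cast_ofNat, one_mul]
    ring
  have hanti : AntitoneOn φ (Set.Icc 0 1) := by
    refine antitoneOn_of_hasDerivWithinAt_nonpos (convex_Icc 0 1)
      (fun s _ => (hφ s).continuousAt.continuousWithinAt)
      (fun s _ => (hφ s).hasDerivWithinAt) fun s hs => ?_
    rw [interior_Icc] at hs
    rw [sub_nonpos]
    have hlip : ‖gradient f (x + s • v) - gradient f x‖ ≤ L * (s * ‖v‖) := by
      simpa [norm_smul, abs_of_pos hs.1] using hsmooth (x + s • v) x
    calc ⟪gradient f (x + s • v) - gradient f x, v⟫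
        ≤ ‖gradient f (x + s • v) - gradient f x‖ * ‖v‖ := real_inner_le_norm _ _
      _ ≤ L * (s * ‖v‖) * ‖v‖ := by gcongr
      _ = L * s * ‖v‖ ^ 2 := by ring
  have h01 := hanti (Set.left_mem_Icc.2 zero_le_one) (Set.right_mem_Icc.2 zero_le_one) zero_le_one
  simp only [φ, v, zero_smul, add_zero, one_smul, add_sub_cancel] at h01
  linarith

theorem le_sub_inner_div_of_norm_sq_le_inner (hL : 0 < L) (hdiff : Differentiable ℝ f)
    (hsmooth : ∀ x y, ‖gradient f x - gradient f y‖ ≤ L * ‖x - y‖) {x v : E}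
    (hv : ‖v‖ ^ 2 ≤ ⟪gradient f x, v⟫) :
    f (x - L⁻¹ • v) ≤ f x - ⟪gradient f x, v⟫ / (2 * L) := by
  have h := descent_lemma hdiff hsmooth x (x - L⁻¹ • v)
  rw [sub_sub_cancel_left, inner_neg_right, norm_neg, inner_smul_right, norm_smul,
    Real.norm_of_nonneg (inv_nonneg.2 hL.le)] at h
  have hL' := hL.ne'
  have hsq : L / 2 * (L⁻¹ * ‖v‖) ^ 2 = L⁻¹ / 2 * ‖v‖ ^ 2 := by field_simp
  calc f (x - L⁻¹ • v) ≤ f x - L⁻¹ * ⟪gradient f x, v⟫ + L⁻¹ / 2 * ‖v‖ ^ 2 := by linarith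
    _ ≤ f x - L⁻¹ * ⟪gradient f x, v⟫ + L⁻¹ / 2 * ⟪gradient f x, v⟫ := by gcongr
    _ = f x - ⟪gradient f x, v⟫ / (2 * L) := by field_simp; ring

end Descent

theorem contraction_of_diagonal_step {ι : Type*} [Fintype ι] {f : EuclideanSpace ℝ ι → ℝ}
    {L μ ρ m : ℝ} (hL : 0 < L) (hdiff : Differentiable ℝ f)
    (hsmooth : ∀ x y, ‖gradient f x - gradient f y‖ ≤ L * ‖x - y‖) {x y : EuclideanSpace ℝ ι}
    (hPL : μ * (f x - m) ≤ 1 / 2 * ‖gradient f x‖ ^ 2) (hρ : 0 ≤ ρ) {p : ι → ℝ}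
    (hp : ∀ i, p i ∈ Set.Icc ρ 1) (hy : ∀ i, y i = x i - p i * gradient f x i / L) :
    f y - m ≤ (1 - μ * ρ / L) * (f x - m) := by
  set g := gradient f x
  set v : EuclideanSpace ℝ ι := WithLp.toLp 2 fun i => p i * g i
  have hyv : y = x - L⁻¹ • v := by
    ext i
    simp only [hy, v, PiLp.sub_apply, PiLp.smul_apply, smul_eq_mul]
    ring
  have hinner : ⟪g, v⟫ = ∑ i, p i * g i ^ 2 := by
    simp only [PiLp.inner_apply, v, RCLike.inner_apply, conj_trivial]
    exact sum_congr rfl fun i _ => by ring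
  have hv : ‖v‖ ^ 2 ≤ ⟪g, v⟫ := by
    rw [EuclideanSpace.real_norm_sq_eq, hinner]
    refine sum_le_sum fun i _ => ?_
    have hp0 : 0 ≤ p i := hρ.trans (hp i).1
    calc (v i) ^ 2 = p i * p i * g i ^ 2 := by simp only [v]; ring
      _ ≤ p i * 1 * g i ^ 2 := by gcongr; exact (hp i).2
      _ = p i * g i ^ 2 := by ring
  have hg : ρ * ‖g‖ ^ 2 ≤ ⟪g, v⟫ := by
    rw [EuclideanSpace.real_norm_sq_eq, hinner, mul_sum]
    exact sum_le_sum fun i _ => by gcongr; exact (hp i).1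
  have hdecrease := le_sub_inner_div_of_norm_sq_le_inner hL hdiff hsmooth hv
  rw [← hyv] at hdecrease
  have hPL' : 2 * μ * ρ * (f x - m) ≤ ⟪g, v⟫ := by
    linarith [mul_le_mul_of_nonneg_left hPL hρ]
  calc f y - m ≤ f x - m - ⟪g, v⟫ / (2 * L) := by linarith
    _ ≤ f x - m - 2 * μ * ρ * (f x - m) / (2 * L) := by gcongr
    _ = (1 - μ * ρ / L) * (f x - m) := by field_simp

theorem exists_pos_forall_le_of_tendsto {u : ℕ → ℝ} {c : ℝ} (hu : ∀ n, 0 < u n) (hc : c ≠ 0)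
    (h : Tendsto u atTop (𝓝 c)) : ∃ δ, 0 < δ ∧ ∀ n, δ ≤ u n := by
  have hc0 : 0 < c := (ge_of_tendsto' h fun n => (hu n).le).lt_of_ne' hc
  obtain ⟨N, hN⟩ := eventually_atTop.1 (h.eventually (lt_mem_nhds (half_lt_self hc0)))
  obtain ⟨n₀, -, hn₀⟩ := (range (N + 1)).exists_min_image u nonempty_range_add_one
  refine ⟨min (c / 2) (u n₀), lt_min (half_pos hc0) (hu n₀), fun n => ?_⟩
  rcases le_or_gt N n with hn | hn
  · exact (min_le_left _ _).trans (hN n hn).le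
  · exact (min_le_right _ _).trans (hn₀ n (mem_range.2 (by omega)))

theorem exists_linear_rate_of_contraction {e q : ℕ → ℝ} {δ : ℝ} (hδ : 0 < δ)
    (hq : ∀ t, δ ≤ q t) (he : ∀ t, 0 ≤ e t) (h : ∀ t, e (t + 1) ≤ (1 - q t) * e t) :
    ∃ c, 0 < c ∧ c < 1 ∧ ∀ t, e t ≤ (1 - c) ^ t * e 0 := by
  have hcδ : min δ (1 / 2) ≤ δ := min_le_left _ _
  have hc2 : min δ (1 / 2) ≤ 1 / 2 := min_le_right _ _
  refine ⟨min δ (1 / 2), lt_min hδ one_half_pos, hc2.trans_lt one_half_lt_one, fun t => ?_⟩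
  refine le_geom (by linarith) t fun k _ => (h k).trans ?_
  exact mul_le_mul_of_nonneg_right (by linarith [hq k]) (he k)

theorem inf'_div_sup'_pos {ι : Type*} {s : Finset ι} (hs : s.Nonempty) {g : ι → ℝ}
    (hg : ∀ i ∈ s, 0 < g i) : 0 < s.inf' hs g / s.sup' hs g := by
  obtain ⟨i, hi⟩ := hs
  exact div_pos ((lt_inf'_iff _).2 hg) ((hg i hi).trans_le (le_sup' g hi))

theorem inf'_div_mem_Icc {ι : Type*} {s : Finset ι} (hs : s.Nonempty) {g : ι → ℝ}
    (hg : ∀ i ∈ s, 0 < g i) {i : ι} (hi : i ∈ s) :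
    s.inf' hs g / g i ∈ Set.Icc (s.inf' hs g / s.sup' hs g) 1 :=
  ⟨div_le_div_of_nonneg_left (le_inf' hs _ fun j hj => (hg j hj).le) (hg i hi) (le_sup' g hi),
    div_le_one_of_le₀ (inf'_le g hi) (hg i hi).le⟩

theorem adagrad_linear_convergence_general {d : ℕ} (hd : 0 < d)
    (f : EuclideanSpace ℝ (Fin d) → ℝ) (L μ : ℝ)
    (hL : 0 < L) (hμ : 0 < μ)
    (hdiff : Differentiable ℝ f)
    (hsmooth : ∀ x y, ‖gradient f x - gradient f y‖ ≤ L * ‖x - y‖)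
    (xstar : EuclideanSpace ℝ (Fin d))
    (hmin : ∀ x, f xstar ≤ f x)
    (hPL : ∀ x, μ * (f x - f xstar) ≤ (1 / 2) * ‖gradient f x‖ ^ 2)
    (w : ℕ → EuclideanSpace ℝ (Fin d))
    (G : ℕ → Fin d → ℝ) (αl αu : ℕ → ℝ)
    (hG : ∀ t i, G t i = ∑ k ∈ Finset.range (t + 1), (gradient f (w k) i) ^ 2)
    (hαl : ∀ t, αl t =
      Finset.univ.inf' ⟨⟨0, hd⟩, Finset.mem_univ _⟩ (fun i => Real.sqrt (G t i)))
    (hαu : ∀ t, αu t =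
      Finset.univ.sup' ⟨⟨0, hd⟩, Finset.mem_univ _⟩ (fun i => Real.sqrt (G t i)))
    (hgrad0 : ∀ i, gradient f (w 0) i ≠ 0)
    (hstep : ∀ t i, w (t + 1) i =
      w t i - (αl t / L) * (gradient f (w t) i / Real.sqrt (G t i)))
    (hratio : ∃ c : ℝ, c ≠ 0 ∧
      Filter.Tendsto (fun t => αl t / αu t) Filter.atTop (nhds c)) :
    (∃ cstar : ℝ, 0 < cstar ∧ cstar < 1 ∧
        ∀ t, f (w t) - f xstar ≤ (1 - cstar) ^ t * (f (w 0) - f xstar)) ∧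
      Filter.Tendsto (fun t => f (w t)) Filter.atTop (nhds (f xstar)) := by
  have hsqrtG : ∀ t i, 0 < √(G t i) := fun t i => Real.sqrt_pos.2 <| by
    rw [hG]
    exact sum_pos' (fun k _ => sq_nonneg _) ⟨0, by simp, sq_pos_of_ne_zero (hgrad0 i)⟩
  have hratio_pos : ∀ t, 0 < αl t / αu t := fun t => by
    rw [hαl, hαu]
    exact inf'_div_sup'_pos _ fun i _ => hsqrtG t i
  have hcontract : ∀ t, f (w (t + 1)) - f xstar ≤
      (1 - μ * (αl t / αu t) / L) * (f (w t) - f xstar) := fun t =>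
    contraction_of_diagonal_step (p := fun i => αl t / √(G t i)) hL hdiff hsmooth (hPL (w t))
      (hratio_pos t).le
      (fun i => by rw [hαl, hαu]; exact inf'_div_mem_Icc _ (fun i _ => hsqrtG t i) (mem_univ i))
      (fun i => by rw [hstep]; ring)
  have hgap : ∀ t, 0 ≤ f (w t) - f xstar := fun t => sub_nonneg.2 (hmin _)
  obtain ⟨c, hc, hlim⟩ := hratio
  obtain ⟨δ, hδ, hδle⟩ := exists_pos_forall_le_of_tendsto hratio_pos hc hlim
  obtain ⟨cstar, hc0, hc1, hrate⟩ := exists_linear_rate_of_contraction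
    (e := fun t => f (w t) - f xstar) (q := fun t => μ * (αl t / αu t) / L)
    (by positivity : 0 < μ * δ / L) (fun t => by gcongr; exact hδle t) hgap hcontract
  refine ⟨⟨cstar, hc0, hc1, hrate⟩, ?_⟩
  have hgeom : Tendsto (fun t => (1 - cstar) ^ t * (f (w 0) - f xstar)) atTop (𝓝 0) := by
    simpa using (tendsto_pow_atTop_nhds_zero_of_lt_one (by linarith) (by linarith)).mul_const
      (f (w 0) - f xstar)
  simpa using (squeeze_zero hgap hrate hgeom).add_const (f xstar)

/-- (Corollary 1: Adagrad converges linearly.)  For an `L`-smooth,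
`μ`-PL function, the Adagrad iterates with adaptive step size `α_l^{(t)}/L` converge
linearly to the global minimum provided the ratio `α_l^{(t)}/α_u^{(t)}` converges to a
nonzero limit. -/
theorem adagrad_linear_convergence {d : ℕ} (hd : 0 < d)
    (f : EuclideanSpace ℝ (Fin d) → ℝ) (L μ : ℝ)
    (hL : 0 < L) (hμ : 0 < μ) (hμL : μ ≤ L)
    (hdiff : Differentiable ℝ f)
    (hsmooth : ∀ x y, ‖gradient f x - gradient f y‖ ≤ L * ‖x - y‖)
    (xstar : EuclideanSpace ℝ (Fin d))
    (hmin : ∀ x, f xstar ≤ f x)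
    (hPL : ∀ x, μ * (f x - f xstar) ≤ (1 / 2) * ‖gradient f x‖ ^ 2)
    (w : ℕ → EuclideanSpace ℝ (Fin d))
    (G : ℕ → Fin d → ℝ) (αl αu : ℕ → ℝ)
    (hG : ∀ t i, G t i = ∑ k ∈ Finset.range (t + 1), (gradient f (w k) i) ^ 2)
    (hαl : ∀ t, αl t =
      Finset.univ.inf' ⟨⟨0, hd⟩, Finset.mem_univ _⟩ (fun i => Real.sqrt (G t i)))
    (hαu : ∀ t, αu t =
      Finset.univ.sup' ⟨⟨0, hd⟩, Finset.mem_univ _⟩ (fun i => Real.sqrt (G t i)))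
    (hgrad0 : ∀ i, gradient f (w 0) i ≠ 0)
    (hstep : ∀ t i, w (t + 1) i =
      w t i - (αl t / L) * (gradient f (w t) i / Real.sqrt (G t i)))
    (hratio : ∃ c : ℝ, c ≠ 0 ∧
      Filter.Tendsto (fun t => αl t / αu t) Filter.atTop (nhds c)) :
    (∃ cstar : ℝ, 0 < cstar ∧ cstar < 1 ∧
        ∀ t, f (w t) - f xstar ≤ (1 - cstar) ^ t * (f (w 0) - f xstar)) ∧
      Filter.Tendsto (fun t => f (w t)) Filter.atTop (nhds (f xstar)) :=
  adagrad_linear_convergence_general hd f L μ hL hμ hdiff hsmooth xstar hmin hPL w G αl αu hG hαl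
    hαu hgrad0 hstep hratio
end

section
/- Let φ : ℝ^d → ℝ^d be an injective, α_u-Lipschitz and α_l-coercive map with 0 < α_l ≤ α_u, and let f : ℝ^d → ℝ be differentiable, nonnegative, and L-smooth, with μ ≤ L. Fix w^{(0)}, set R = 2√(2L)·√(f(w^{(0)}))·α_u²/(α_l μ), let B̃ = {x ∈ ℝ^d : ‖φ(x) − φ(w^{(0)})‖ ≤ R}, and assume f is μ-PL* on B̃ (i.e., (1/2)‖∇f(x)‖² ≥ μ f(x) for all x ∈ B̃). Let (w^{(t)}) satisfy the GMD recursion φ(w^{(t+1)}) = φ(w^{(t)}) − η ∇f(w^{(t)}) with η = α_l/L. Then: (1) there exists w^{(∞)} ∈ B̃ with f(w^{(∞)}) = 0 and w^{(t)} → w^{(∞)}; (2) f(w^{(t)}) ≤ (1 − μα_l²/(Lα_u²))^t f(w^{(0)}) for all t; and (3) for every w ∈ B̃ with f(w) = 0, ‖φ(w) − φ(w^{(∞)})‖ ≤ 2R. -/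
/-!
Coercivity of `φ` turns a mirror step into a descent step, `f w⁺ ≤ f w - (L/2)‖w⁺ - w‖²`, and the
Lipschitz bound on `φ` gives `α_l ‖∇f w‖ ≤ L α_u ‖w⁺ - w‖`; with the PL* inequality this contracts
`f` by `ρ = 1 - μα_l²/(Lα_u²)` as long as `w` lies in `B̃`. Since `‖∇f‖² ≤ 2Lf`, the dual steps
`η‖∇f(w⁽ᵗ⁾)‖` then decay like `√ρ ^ t`, and `R` is chosen so that their total never exceeds it:
by induction the iterates stay in `B̃`. The primal steps decay geometrically too, so `w⁽ᵗ⁾` is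
Cauchy, and its limit is a zero of `f` in the closed set `B̃`.
-/

open Real Set Filter
open scoped RealInnerProductSpace

section LipschitzGradient

variable {E : Type*} [NormedAddCommGroup E] [InnerProductSpace ℝ E] [CompleteSpace E]
  {f : E → ℝ} {L : ℝ}

theorem hasDerivAt_comp_add_smul (hf : Differentiable ℝ f) (x v : E) (t : ℝ) :
    HasDerivAt (fun s : ℝ => f (x + s • v)) (⟪gradient f (x + t • v), v⟫) t := by
  have hline : HasDerivAt (fun s : ℝ => x + s • v) v t := by
    simpa using ((hasDerivAt_id t).smul_const v).const_add x
  have h := (hf _).hasGradientAt.hasFDerivAt.comp_hasDerivAt t hline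
  simp only [InnerProductSpace.toDual_apply_apply] at h
  exact h

theorem le_add_inner_gradient_add_sq (hf : Differentiable ℝ f)
    (hsmooth : ∀ x y, ‖gradient f x - gradient f y‖ ≤ L * ‖x - y‖) (x y : E) :
    f y ≤ f x + ⟪gradient f x, y - x⟫ + L / 2 * ‖y - x‖ ^ 2 := by
  set v := y - x
  let g : ℝ → ℝ := fun t => f (x + t • v) - t * ⟪gradient f x, v⟫ - L / 2 * t ^ 2 * ‖v‖ ^ 2
  have hg : ∀ t, HasDerivAt g
      (⟪gradient f (x + t • v) - gradient f x, v⟫ - L * t * ‖v‖ ^ 2) t := by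
    intro t
    refine (((hasDerivAt_comp_add_smul hf x v t).sub ((hasDerivAt_id t).mul_const _)).sub
      (((hasDerivAt_pow 2 t).const_mul (L / 2)).mul_const (‖v‖ ^ 2))).congr_deriv ?_
    rw [inner_sub_left]
    simp only [Nat.cast_ofNat]
    ring
  have hg_nonpos : ∀ t ∈ interior (Ici (0 : ℝ)),
      ⟪gradient f (x + t • v) - gradient f x, v⟫ - L * t * ‖v‖ ^ 2 ≤ 0 := by
    intro t ht
    rw [interior_Ici, mem_Ioi] at ht
    rw [sub_nonpos]
    calc ⟪gradient f (x + t • v) - gradient f x, v⟫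
        ≤ ‖gradient f (x + t • v) - gradient f x‖ * ‖v‖ := real_inner_le_norm _ _
      _ ≤ L * ‖t • v‖ * ‖v‖ := by
          gcongr
          simpa using hsmooth (x + t • v) x
      _ = L * t * ‖v‖ ^ 2 := by rw [norm_smul, norm_of_nonneg ht.le]; ring
  have hanti : AntitoneOn g (Ici 0) :=
    antitoneOn_of_hasDerivWithinAt_nonpos (convex_Ici 0)
      (fun t _ => (hg t).continuousAt.continuousWithinAt)
      (fun t _ => (hg t).hasDerivWithinAt) hg_nonpos
  have := hanti self_mem_Ici (mem_Ici.2 zero_le_one) zero_le_one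
  simp only [g, v, zero_smul, add_zero, one_smul, add_sub_cancel] at this
  linarith

theorem norm_gradient_le_sqrt (hL : 0 < L) (hf : Differentiable ℝ f) (hnonneg : ∀ x, 0 ≤ f x)
    (hsmooth : ∀ x y, ‖gradient f x - gradient f y‖ ≤ L * ‖x - y‖) (x : E) :
    ‖gradient f x‖ ≤ √(2 * L) * √(f x) := by
  rw [← sqrt_mul (by positivity)]
  refine le_sqrt_of_sq_le ?_
  -- one gradient step of length `1 / L` cannot push `f` below zero
  have h := le_add_inner_gradient_add_sq hf hsmooth x (x - L⁻¹ • gradient f x)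
  rw [sub_sub_cancel_left, inner_neg_right, real_inner_smul_right, real_inner_self_eq_norm_sq,
    norm_neg, norm_smul, norm_inv, norm_of_nonneg hL.le] at h
  have hdrop : L⁻¹ * ‖gradient f x‖ ^ 2 / 2 ≤ f x := by
    have := hnonneg (x - L⁻¹ • gradient f x)
    have : L / 2 * (L⁻¹ * ‖gradient f x‖) ^ 2 = L⁻¹ * ‖gradient f x‖ ^ 2 / 2 := by
      field_simp
    linarith
  calc ‖gradient f x‖ ^ 2 = 2 * L * (L⁻¹ * ‖gradient f x‖ ^ 2 / 2) := by field_simp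
    _ ≤ 2 * L * f x := by gcongr

end LipschitzGradient

section MirrorStep

variable {E : Type*} [NormedAddCommGroup E] [InnerProductSpace ℝ E]
  {φ : E → E} {αl αu L : ℝ} {g x x' : E}

theorem norm_sub_of_mirror_step (hαl : 0 ≤ αl) (hL : 0 < L)
    (hstep : φ x' = φ x - (αl / L) • g) : ‖φ x' - φ x‖ = αl / L * ‖g‖ := by
  rw [hstep, sub_sub_cancel_left, norm_neg, norm_smul, norm_of_nonneg (by positivity)]

theorem inner_le_neg_mul_sq_of_mirror_step (hαl : 0 < αl) (hL : 0 < L)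
    (hcoer : ∀ x y, αl * ‖x - y‖ ^ 2 ≤ ⟪φ x - φ y, x - y⟫)
    (hstep : φ x' = φ x - (αl / L) • g) :
    ⟪g, x' - x⟫ ≤ -(L * ‖x' - x‖ ^ 2) := by
  have h := hcoer x' x
  rw [hstep, sub_sub_cancel_left, inner_neg_left, real_inner_smul_left] at h
  have : αl * (L * ‖x' - x‖ ^ 2) ≤ αl * -⟪g, x' - x⟫ := by
    calc αl * (L * ‖x' - x‖ ^ 2) = L * (αl * ‖x' - x‖ ^ 2) := by ring
      _ ≤ L * -(αl / L * ⟪g, x' - x⟫) := by gcongr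
      _ = αl * -⟪g, x' - x⟫ := by field_simp
  linarith [le_of_mul_le_mul_left this hαl]

theorem norm_sub_le_of_mirror_step (hαl : 0 < αl) (hL : 0 < L)
    (hcoer : ∀ x y, αl * ‖x - y‖ ^ 2 ≤ ⟪φ x - φ y, x - y⟫)
    (hstep : φ x' = φ x - (αl / L) • g) :
    ‖x' - x‖ ≤ ‖g‖ / L := by
  have h := inner_le_neg_mul_sq_of_mirror_step hαl hL hcoer hstep
  have hcs : -⟪g, x' - x⟫ ≤ ‖g‖ * ‖x' - x‖ := (neg_le_abs _).trans (abs_real_inner_le_norm _ _)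
  rw [le_div_iff₀ hL]
  rcases (norm_nonneg (x' - x)).eq_or_lt with h0 | hpos
  · rw [← h0, zero_mul]; exact norm_nonneg g
  · nlinarith

variable [CompleteSpace E] {f : E → ℝ} {μ : ℝ}

theorem le_mul_of_mirror_step (hαl : 0 < αl) (hαu : 0 < αu) (hL : 0 < L)
    (hcoer : ∀ x y, αl * ‖x - y‖ ^ 2 ≤ ⟪φ x - φ y, x - y⟫)
    (hlip : ∀ x y, ‖φ x - φ y‖ ≤ αu * ‖x - y‖)
    (hf : Differentiable ℝ f) (hsmooth : ∀ x y, ‖gradient f x - gradient f y‖ ≤ L * ‖x - y‖)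
    (hPL : μ * f x ≤ 1 / 2 * ‖gradient f x‖ ^ 2)
    (hstep : φ x' = φ x - (αl / L) • gradient f x) :
    f x' ≤ (1 - μ * αl ^ 2 / (L * αu ^ 2)) * f x := by
  set a := ‖gradient f x‖
  set b := ‖x' - x‖
  have hdescent : f x' ≤ f x - L / 2 * b ^ 2 := by
    have := le_add_inner_gradient_add_sq hf hsmooth x x'
    linarith [inner_le_neg_mul_sq_of_mirror_step hαl hL hcoer hstep]
  have hgrad : αl * a ≤ L * (αu * b) := by
    have := hlip x' x
    rw [norm_sub_of_mirror_step hαl.le hL hstep] at this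
    rw [div_mul_eq_mul_div, div_le_iff₀ hL] at this
    linarith
  have hgrad_sq : αl ^ 2 * a ^ 2 ≤ L ^ 2 * αu ^ 2 * b ^ 2 := by
    nlinarith [mul_nonneg hαl.le (norm_nonneg (gradient f x))]
  have hpos : 0 < L * αu ^ 2 := by positivity
  suffices L * αu ^ 2 * f x' ≤ (L * αu ^ 2 - μ * αl ^ 2) * f x by
    rwa [one_sub_div hpos.ne', div_mul_eq_mul_div, le_div_iff₀ hpos, mul_comm]
  nlinarith

end MirrorStep

theorem sqrt_le_sqrt_pow_mul {a b ρ : ℝ} {t : ℕ} (hρ : 0 ≤ ρ) (h : a ≤ ρ ^ t * b) :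
    √a ≤ √ρ ^ t * √b := by
  calc √a ≤ √(ρ ^ t * b) := sqrt_le_sqrt h
    _ = √ρ ^ t * √b := by
      rw [sqrt_mul (pow_nonneg hρ t), ← sqrt_sq (pow_nonneg (sqrt_nonneg ρ) t), ← pow_mul,
        mul_comm t 2, pow_mul, sq_sqrt hρ]

theorem le_pow_mul_and_dist_le_of_local_contraction {X : Type*} [PseudoMetricSpace X]
    (u : ℕ → X) (v : ℕ → ℝ) {ρ c R : ℝ} (hρ0 : 0 ≤ ρ) (hρ1 : ρ < 1) (hc : 0 ≤ c)
    (hcontract : ∀ t, dist (u t) (u 0) ≤ R → v (t + 1) ≤ ρ * v t)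
    (hmove : ∀ t, dist (u (t + 1)) (u t) ≤ c * √(v t))
    (hR : 2 * c * √(v 0) ≤ (1 - ρ) * R) (t : ℕ) :
    v t ≤ ρ ^ t * v 0 ∧ dist (u t) (u 0) ≤ R := by
  set σ := √ρ
  have hσ0 : 0 ≤ σ := sqrt_nonneg ρ
  have hσsq : σ ^ 2 = ρ := sq_sqrt hρ0
  have hσ1 : σ < 1 := by nlinarith
  have hR0 : 0 ≤ R := by nlinarith [mul_nonneg hc (sqrt_nonneg (v 0))]
  -- `1 - ρ = (1 - σ) (1 + σ) ≤ 2 (1 - σ)`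
  have hR' : c * √(v 0) ≤ (1 - σ) * R := by
    nlinarith [mul_nonneg (mul_nonneg (sub_nonneg.2 hσ1.le) hR0) (sub_nonneg.2 hσ1.le)]
  have hsum : ∀ t, c * √(v 0) * ∑ s ∈ Finset.range t, σ ^ s ≤ R := by
    intro t
    have hgeom := geom_sum_Ico_le_of_lt_one (m := 0) (n := t) hσ0 hσ1
    rw [← Finset.range_eq_Ico, pow_zero] at hgeom
    calc c * √(v 0) * ∑ s ∈ Finset.range t, σ ^ s ≤ c * √(v 0) * (1 / (1 - σ)) := by gcongr
      _ ≤ R := by rw [mul_one_div, div_le_iff₀ (by linarith)]; linarith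
  have key : ∀ t, v t ≤ ρ ^ t * v 0 ∧
      dist (u t) (u 0) ≤ c * √(v 0) * ∑ s ∈ Finset.range t, σ ^ s := by
    intro t
    induction t with
    | zero => simp
    | succ t ih =>
      obtain ⟨hv, hdist⟩ := ih
      constructor
      · calc v (t + 1) ≤ ρ * v t := hcontract t (hdist.trans (hsum t))
          _ ≤ ρ * (ρ ^ t * v 0) := by gcongr
          _ = ρ ^ (t + 1) * v 0 := by ring
      · calc dist (u (t + 1)) (u 0) ≤ dist (u (t + 1)) (u t) + dist (u t) (u 0) :=
            dist_triangle _ _ _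
          _ ≤ c * (σ ^ t * √(v 0)) + c * √(v 0) * ∑ s ∈ Finset.range t, σ ^ s := by
            gcongr
            exact (hmove t).trans (by gcongr; exact sqrt_le_sqrt_pow_mul hρ0 hv)
          _ = c * √(v 0) * ∑ s ∈ Finset.range (t + 1), σ ^ s := by
            rw [Finset.sum_range_succ]; ring
  exact ⟨(key t).1, (key t).2.trans (hsum t)⟩

section GMD

variable {E : Type*} [NormedAddCommGroup E] [InnerProductSpace ℝ E] [CompleteSpace E]
  {φ : E → E} {αl αu : ℝ} {f : E → ℝ} {L μ R : ℝ} {w : ℕ → E}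

theorem gmd_rate_mem_Ico (hαl : 0 < αl) (hαlu : αl ≤ αu) (hL : 0 < L) (hμ : 0 < μ) (hμL : μ ≤ L) :
    1 - μ * αl ^ 2 / (L * αu ^ 2) ∈ Ico 0 1 := by
  have hαu : 0 < αu := hαl.trans_le hαlu
  constructor
  · rw [sub_nonneg, div_le_one (by positivity)]
    gcongr
  · have : 0 < μ * αl ^ 2 / (L * αu ^ 2) := by positivity
    linarith

theorem gmd_decay_and_mem_ball (hαl : 0 < αl) (hαlu : αl ≤ αu)
    (hlip : ∀ x y, ‖φ x - φ y‖ ≤ αu * ‖x - y‖)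
    (hcoer : ∀ x y, αl * ‖x - y‖ ^ 2 ≤ ⟪φ x - φ y, x - y⟫)
    (hL : 0 < L) (hμ : 0 < μ) (hμL : μ ≤ L) (hf : Differentiable ℝ f) (hnonneg : ∀ x, 0 ≤ f x)
    (hsmooth : ∀ x y, ‖gradient f x - gradient f y‖ ≤ L * ‖x - y‖)
    (hR : R = 2 * √(2 * L) * √(f (w 0)) * αu ^ 2 / (αl * μ))
    (hPL : ∀ x, ‖φ x - φ (w 0)‖ ≤ R → μ * f x ≤ 1 / 2 * ‖gradient f x‖ ^ 2)
    (hstep : ∀ t, φ (w (t + 1)) = φ (w t) - (αl / L) • gradient f (w t)) (t : ℕ) :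
    f (w t) ≤ (1 - μ * αl ^ 2 / (L * αu ^ 2)) ^ t * f (w 0) ∧ ‖φ (w t) - φ (w 0)‖ ≤ R := by
  have hαu : 0 < αu := hαl.trans_le hαlu
  set ρ := 1 - μ * αl ^ 2 / (L * αu ^ 2) with hρ
  obtain ⟨hρ0, hρ1⟩ := gmd_rate_mem_Ico hαl hαlu hL hμ hμL
  have hcontract (t : ℕ) (ht : dist (φ (w t)) (φ (w 0)) ≤ R) : f (w (t + 1)) ≤ ρ * f (w t) :=
    le_mul_of_mirror_step hαl hαu hL hcoer hlip hf hsmooth (hPL _ (by rwa [dist_eq_norm] at ht))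
      (hstep t)
  have hmove (t : ℕ) :
      dist (φ (w (t + 1))) (φ (w t)) ≤ αl / L * √(2 * L) * √(f (w t)) := by
    rw [dist_eq_norm, norm_sub_of_mirror_step hαl.le hL (hstep t), mul_assoc]
    gcongr
    exact norm_gradient_le_sqrt hL hf hnonneg hsmooth _
  have hradius : 2 * (αl / L * √(2 * L)) * √(f (w 0)) ≤ (1 - ρ) * R :=
    le_of_eq (by rw [hR, hρ]; field_simp; ring)
  simpa only [dist_eq_norm] using le_pow_mul_and_dist_le_of_local_contraction
    (fun t => φ (w t)) (fun t => f (w t)) hρ0 hρ1 (by positivity) hcontract hmove hradius t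

theorem cauchySeq_of_mirror_steps (hαl : 0 < αl) (hL : 0 < L)
    (hcoer : ∀ x y, αl * ‖x - y‖ ^ 2 ≤ ⟪φ x - φ y, x - y⟫)
    (hf : Differentiable ℝ f) (hnonneg : ∀ x, 0 ≤ f x)
    (hsmooth : ∀ x y, ‖gradient f x - gradient f y‖ ≤ L * ‖x - y‖)
    (hstep : ∀ t, φ (w (t + 1)) = φ (w t) - (αl / L) • gradient f (w t))
    {ρ : ℝ} (hρ0 : 0 ≤ ρ) (hρ1 : ρ < 1) (hdecay : ∀ t, f (w t) ≤ ρ ^ t * f (w 0)) :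
    CauchySeq w := by
  have hσ1 : √ρ < 1 := by rwa [sqrt_lt' one_pos, one_pow]
  refine cauchySeq_of_le_geometric (√ρ) (√(2 * L) * √(f (w 0)) / L) hσ1 fun t => ?_
  rw [dist_comm, dist_eq_norm]
  calc ‖w (t + 1) - w t‖ ≤ ‖gradient f (w t)‖ / L :=
        norm_sub_le_of_mirror_step hαl hL hcoer (hstep t)
    _ ≤ √(2 * L) * (√ρ ^ t * √(f (w 0))) / L := by
        gcongr
        exact (norm_gradient_le_sqrt hL hf hnonneg hsmooth _).trans
          (by gcongr; exact sqrt_le_sqrt_pow_mul hρ0 (hdecay t))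
    _ = √(2 * L) * √(f (w 0)) / L * √ρ ^ t := by ring

end GMD

theorem gmd_local_convergence_general {d : ℕ}
    (φ : EuclideanSpace ℝ (Fin d) → EuclideanSpace ℝ (Fin d))
    (αl αu : ℝ) (hαl : 0 < αl) (hαlu : αl ≤ αu)
    (hlip : ∀ x y, ‖φ x - φ y‖ ≤ αu * ‖x - y‖)
    (hcoer : ∀ x y, αl * ‖x - y‖ ^ 2 ≤ (inner ℝ (φ x - φ y) (x - y) : ℝ))
    (f : EuclideanSpace ℝ (Fin d) → ℝ) (L μ : ℝ)
    (hL : 0 < L) (hμ : 0 < μ) (hμL : μ ≤ L)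
    (hdiff : Differentiable ℝ f)
    (hnonneg : ∀ x, 0 ≤ f x)
    (hsmooth : ∀ x y, ‖gradient f x - gradient f y‖ ≤ L * ‖x - y‖)
    (w : ℕ → EuclideanSpace ℝ (Fin d))
    (R : ℝ) (hR : R = 2 * Real.sqrt (2 * L) * Real.sqrt (f (w 0)) * αu ^ 2 / (αl * μ))
    (hPL : ∀ x ∈ {x : EuclideanSpace ℝ (Fin d) | ‖φ x - φ (w 0)‖ ≤ R},
      μ * f x ≤ (1 / 2) * ‖gradient f x‖ ^ 2)
    (hstep : ∀ t, φ (w (t + 1)) = φ (w t) - (αl / L) • gradient f (w t)) :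
    (∀ t, f (w t) ≤ (1 - μ * αl ^ 2 / (L * αu ^ 2)) ^ t * f (w 0)) ∧
      ∃ winf : EuclideanSpace ℝ (Fin d),
        ‖φ winf - φ (w 0)‖ ≤ R ∧ f winf = 0 ∧
          Filter.Tendsto w Filter.atTop (nhds winf) ∧
          ∀ z : EuclideanSpace ℝ (Fin d),
            ‖φ z - φ (w 0)‖ ≤ R → f z = 0 → ‖φ z - φ winf‖ ≤ 2 * R := by
  obtain ⟨hρ0, hρ1⟩ := gmd_rate_mem_Ico hαl hαlu hL hμ hμL
  have hbounds := gmd_decay_and_mem_ball hαl hαlu hlip hcoer hL hμ hμL hdiff hnonneg hsmooth hR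
    hPL hstep
  obtain ⟨winf, hlim⟩ := cauchySeq_tendsto_of_complete <| cauchySeq_of_mirror_steps hαl hL hcoer
    hdiff hnonneg hsmooth hstep hρ0 hρ1 fun t => (hbounds t).1
  have hφ : Continuous φ :=
    (LipschitzWith.of_dist_le' fun x y => by simpa only [dist_eq_norm] using hlip x y).continuous
  have hf_winf : f winf = 0 := by
    refine tendsto_nhds_unique ((hdiff.continuous.tendsto winf).comp hlim) ?_
    refine squeeze_zero (fun t => hnonneg _) (fun t => (hbounds t).1) ?_
    simpa using (tendsto_pow_atTop_nhds_zero_of_lt_one hρ0 hρ1).mul_const (f (w 0))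
  have hball : ‖φ winf - φ (w 0)‖ ≤ R :=
    (isClosed_le (hφ.sub continuous_const).norm continuous_const).mem_of_tendsto hlim
      (Eventually.of_forall fun t => (hbounds t).2)
  refine ⟨fun t => (hbounds t).1, winf, hball, hf_winf, hlim, fun z hz _ => ?_⟩
  calc ‖φ z - φ winf‖ ≤ ‖φ z - φ (w 0)‖ + ‖φ (w 0) - φ winf‖ :=
        norm_sub_le_norm_sub_add_norm_sub _ _ _
    _ ≤ R + R := by rw [norm_sub_rev (φ (w 0))]; gcongr
    _ = 2 * R := by ring

/-- (Theorem 4: local convergence and implicit regularization of GMD.)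
If `f` is nonnegative, `L`-smooth and `μ`-PL* on the dual ball
`B̃ = {x : ‖φ(x) - φ(w⁰)‖ ≤ R}` with `R = 2√(2L)√(f(w⁰))α_u²/(α_l μ)`, and `φ` is
injective, `α_u`-Lipschitz and `α_l`-coercive, then GMD with step size `η = α_l/L`
converges linearly to some interpolating solution `w^{(∞)} ∈ B̃`, and every interpolating
solution in `B̃` is within `2R` of `w^{(∞)}` in the dual norm. -/
theorem gmd_local_convergence {d : ℕ}
    (φ : EuclideanSpace ℝ (Fin d) → EuclideanSpace ℝ (Fin d))
    (αl αu : ℝ) (hαl : 0 < αl) (hαlu : αl ≤ αu)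
    (hinj : Function.Injective φ)
    (hlip : ∀ x y, ‖φ x - φ y‖ ≤ αu * ‖x - y‖)
    (hcoer : ∀ x y, αl * ‖x - y‖ ^ 2 ≤ (inner ℝ (φ x - φ y) (x - y) : ℝ))
    (f : EuclideanSpace ℝ (Fin d) → ℝ) (L μ : ℝ)
    (hL : 0 < L) (hμ : 0 < μ) (hμL : μ ≤ L)
    (hdiff : Differentiable ℝ f)
    (hnonneg : ∀ x, 0 ≤ f x)
    (hsmooth : ∀ x y, ‖gradient f x - gradient f y‖ ≤ L * ‖x - y‖)
    (w : ℕ → EuclideanSpace ℝ (Fin d))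
    (R : ℝ) (hR : R = 2 * Real.sqrt (2 * L) * Real.sqrt (f (w 0)) * αu ^ 2 / (αl * μ))
    (hPL : ∀ x ∈ {x : EuclideanSpace ℝ (Fin d) | ‖φ x - φ (w 0)‖ ≤ R},
      μ * f x ≤ (1 / 2) * ‖gradient f x‖ ^ 2)
    (hstep : ∀ t, φ (w (t + 1)) = φ (w t) - (αl / L) • gradient f (w t)) :
    (∀ t, f (w t) ≤ (1 - μ * αl ^ 2 / (L * αu ^ 2)) ^ t * f (w 0)) ∧
      ∃ winf : EuclideanSpace ℝ (Fin d),
        ‖φ winf - φ (w 0)‖ ≤ R ∧ f winf = 0 ∧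
          Filter.Tendsto w Filter.atTop (nhds winf) ∧
          ∀ z : EuclideanSpace ℝ (Fin d),
            ‖φ z - φ (w 0)‖ ≤ R → f z = 0 → ‖φ z - φ winf‖ ≤ 2 * R :=
  gmd_local_convergence_general φ αl αu hαl hαlu hlip hcoer f L μ hL hμ hμL hdiff hnonneg hsmooth w
    R hR hPL hstep
end
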